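/- Support for ⩒ from bounded witnesses: let ♭(ψ) = m and ♭(χ) = n, and suppose for all t ⊆ s with |t| ≤ m+n+2, M, t ⊨ ψ⩒χ. Then either M, t ⊨ ψ for all t ⊆ s with |t| ≤ m+1, or M, t ⊨ χ for all t ⊆ s with |t| ≤ n+1. -/
import Mathlib


inductive InqForm (P : Type) : Type
  | atom : P → InqForm P
  | bot : InqForm P
  | and : InqForm P → InqForm P → InqForm P
  | impl : InqForm P → InqForm P → InqForm P
  | ior : InqForm P → InqForm P → InqForm P
  | box : InqForm P → InqForm P
  | boxplus : InqForm P → InqForm P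

/-- A pseudo-model: worlds `W`, inquisitive assignment `Sig` (nonempty valued),
propositional valuation `V`. -/
structure PseudoModel (P W : Type) where
  Sig : W → Set (Set W)
  Sig_nonempty : ∀ w, (Sig w).Nonempty
  V : P → Set W

/-- The associated modal assignment σ(w) = ⋃ Σ(w). -/
def PseudoModel.sigma {P W : Type} (M : PseudoModel P W) (w : W) : Set W :=
  ⋃₀ M.Sig w

/-- Support semantics of INQML over pseudo-models. -/
def support {P W : Type} (M : PseudoModel P W) : InqForm P → Set W → Prop
  | .atom p, s => s ⊆ M.V p
  | .bot, s => s = ∅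
  | .and φ ψ, s => support M φ s ∧ support M ψ s
  | .impl φ ψ, s => ∀ t ⊆ s, support M φ t → support M ψ t
  | .ior φ ψ, s => support M φ s ∨ support M ψ s
  | .box φ, s => ∀ w ∈ s, support M φ (M.sigma w)
  | .boxplus φ, s => ∀ w ∈ s, ∀ t ∈ M.Sig w, support M φ t

/-- The flatness grade ♭(φ). -/
def flatGrade {P : Type} : InqForm P → ℕ
  | .atom _ => 0
  | .bot => 0
  | .and φ ψ => max (flatGrade φ) (flatGrade ψ)
  | .impl _ ψ => flatGrade ψ
  | .ior φ ψ => flatGrade φ + flatGrade ψ + 1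
  | .box _ => 0
  | .boxplus _ => 0

/-- Downward closure of a family of information states. -/
def downClose {W : Type} (Pi : Set (Set W)) : Set (Set W) :=
  {t | ∃ s ∈ Pi, t ⊆ s}


lemma support_persist {P W : Type} (M : PseudoModel P W) :
    ∀ (φ : InqForm P) (s t : Set W), t ⊆ s → support M φ s → support M φ t := by
  intro φ
  induction φ with
  | atom p => intro s t hts hs; exact hts.trans hs
  | bot => intro s t hts hs; subst hs; exact Set.subset_empty_iff.mp hts
  | and φ ψ ihφ ihψ => intro s t hts hs; exact ⟨ihφ s t hts hs.1, ihψ s t hts hs.2⟩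
  | impl φ ψ ihφ ihψ => intro s t hts hs u hut hu; exact hs u (hut.trans hts) hu
  | ior φ ψ ihφ ihψ =>
    intro s t hts hs
    rcases hs with hs | hs
    · exact Or.inl (ihφ s t hts hs)
    · exact Or.inr (ihψ s t hts hs)
  | box φ ih => intro s t hts hs w hw; exact hs w (hts hw)
  | boxplus φ ih => intro s t hts hs w hw; exact hs w (hts hw)

theorem ior_bounded_witnesses {P W : Type} (ψ χ : InqForm P) (m n : ℕ)
    (hm : flatGrade ψ = m) (hn : flatGrade χ = n)
    (M : PseudoModel P W) (s : Set W)
    (h : ∀ t ⊆ s, t.Finite → t.ncard ≤ m + n + 2 → support M (InqForm.ior ψ χ) t) :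
    (∀ t ⊆ s, t.Finite → t.ncard ≤ m + 1 → support M ψ t) ∨
      (∀ t ⊆ s, t.Finite → t.ncard ≤ n + 1 → support M χ t) := by
  by_contra hc
  push_neg at hc
  obtain ⟨h1, h2⟩ := hc
  obtain ⟨t1, ht1s, ht1f, ht1c, ht1⟩ := h1
  obtain ⟨t2, ht2s, ht2f, ht2c, ht2⟩ := h2
  have hsub : t1 ∪ t2 ⊆ s := Set.union_subset ht1s ht2s
  have hf : (t1 ∪ t2).Finite := ht1f.union ht2f
  have hc : (t1 ∪ t2).ncard ≤ m + n + 2 := by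
    calc (t1 ∪ t2).ncard ≤ t1.ncard + t2.ncard := Set.ncard_union_le t1 t2
    _ ≤ (m + 1) + (n + 1) := Nat.add_le_add ht1c ht2c
    _ = m + n + 2 := by ring
  rcases h (t1 ∪ t2) hsub hf hc with hs | hs
  · exact ht1 (support_persist M ψ _ _ Set.subset_union_left hs)
  · exact ht2 (support_persist M χ _ _ Set.subset_union_right hs)
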